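/- The function d(s) = 4(1-s)s/((1+s)(3s+1)) on the interval [0,1] attains its maximum value 6 - 4√2 at s = (2√2 - 1)/7. -/

import Mathlib

/-!
The numerator deficit `(6 - 4√2)(1 + s)(3s + 1) - 4(1 - s)s` is a quadratic in `s` with zero
discriminant, namely `(22 - 12√2)(s - s₀)²` with `s₀ = (2√2 - 1)/7`. Hence `d(s) ≤ 6 - 4√2`
wherever the denominator is positive, with equality exactly at `s₀`.
-/

open Real

noncomputable section

def k12Density (s : ℝ) : ℝ := 4 * (1 - s) * s / ((1 + s) * (3 * s + 1))

lemma k12Density_gap_eq_sq (s : ℝ) :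
    (6 - 4 * √2) * ((1 + s) * (3 * s + 1)) - 4 * (1 - s) * s =
      (22 - 12 * √2) * (s - (2 * √2 - 1) / 7) ^ 2 := by
  linear_combination (48 * √2 - 136 - 336 * s) / 49 * sq_sqrt (zero_le_two : (0 : ℝ) ≤ 2)

lemma one_le_sqrt_two : 1 ≤ √2 := by
  rw [one_le_sqrt]; norm_num

lemma sqrt_two_lt_eleven_div_six : √2 < 11 / 6 := by
  rw [sqrt_lt' (by norm_num)]; norm_num

lemma k12Density_denom_pos {s : ℝ} (hs : -(1 / 3) < s) : 0 < (1 + s) * (3 * s + 1) := by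
  apply mul_pos <;> linarith

lemma k12Density_le {s : ℝ} (hs : -(1 / 3) < s) : k12Density s ≤ 6 - 4 * √2 := by
  rw [k12Density, div_le_iff₀ (k12Density_denom_pos hs)]
  have hgap := k12Density_gap_eq_sq s
  nlinarith [sq_nonneg (s - (2 * √2 - 1) / 7), sqrt_two_lt_eleven_div_six]

lemma optimalSplit_mem_Icc : (2 * √2 - 1) / 7 ∈ Set.Icc (0 : ℝ) 1 := by
  have := sqrt_two_lt_eleven_div_six
  have := one_le_sqrt_two
  constructor <;> linarith

lemma k12Density_optimalSplit : k12Density ((2 * √2 - 1) / 7) = 6 - 4 * √2 := by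
  have hs : -(1 / 3) < (2 * √2 - 1) / 7 := by linarith [optimalSplit_mem_Icc.1]
  rw [k12Density, div_eq_iff (k12Density_denom_pos hs).ne']
  linarith [k12Density_gap_eq_sq ((2 * √2 - 1) / 7)]

end

theorem stmt_5 :
    IsMaxOn (fun s : ℝ => 4*(1-s)*s/((1+s)*(3*s+1))) (Set.Icc 0 1) ((2*Real.sqrt 2 - 1)/7) ∧
    (2*Real.sqrt 2 - 1)/7 ∈ Set.Icc (0:ℝ) 1 ∧
    4*(1-(2*Real.sqrt 2 - 1)/7)*((2*Real.sqrt 2 - 1)/7) /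
      ((1+(2*Real.sqrt 2 - 1)/7)*(3*((2*Real.sqrt 2 - 1)/7)+1)) = 6 - 4*Real.sqrt 2 := by
  refine ⟨fun s hs => ?_, optimalSplit_mem_Icc, k12Density_optimalSplit⟩
  change k12Density s ≤ k12Density ((2 * √2 - 1) / 7)
  rw [k12Density_optimalSplit]
  exact k12Density_le (by linarith [hs.1])
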